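/- arXiv:1405.3740 — 7 statements merged into one kernel-verified Lean document; each statement's English description precedes it below -/
import Mathlib

section
/- Let f : ℝⁿ → ℝⁿ be a quadratic vector field, h ∈ ℝ, and suppose I - (h/2) f'(x) is invertible, where f'(x) is the Jacobian of f at x. Define x' = x + h (I - (h/2) f'(x))⁻¹ f(x). Then x' satisfies the Kahan equation (x' - x)/h = 2 f((x+x')/2) - (1/2) f(x) - (1/2) f(x'). -/
/-!
Writing `D = f'(x)` and `d = x' - x`, a quadratic map satisfies
`f (x + t • d) = f x + t • D d + t² • Q d d` exactly, so the `Q d d` terms cancel in the Kahan combination and its right-hand side collapses to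
`f x + (1/2) • D d`. The Kahan equation is therefore the linear equation `(1 - (h/2) • D) (d / h) = f x`,
which is the Rosenbrock step.
-/

section Quadratic

variable {𝕜 E : Type*}

theorem kahan_combination_of_quadratic [Field 𝕜] [CharZero 𝕜] [AddCommGroup E] [Module 𝕜 E]
    {f : E → E} {Q : E →ₗ[𝕜] E →ₗ[𝕜] E} {L : E →ₗ[𝕜] E} {c : E}
    (hf : ∀ y, f y = Q y y + L y + c) (x y : E) :
    (2 : 𝕜) • f ((1/2 : 𝕜) • (x + y)) - (1/2 : 𝕜) • f x - (1/2 : 𝕜) • f y =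
      f x + (1/2 : 𝕜) • (Q x + Q.flip x + L) (y - x) := by
  simp only [hf, map_add, map_sub, map_smul, LinearMap.add_apply,
    LinearMap.smul_apply, LinearMap.flip_apply]
  module

theorem hasFDerivAt_quadratic [NontriviallyNormedField 𝕜] [CompleteSpace 𝕜]
    [NormedAddCommGroup E] [NormedSpace 𝕜 E] [FiniteDimensional 𝕜 E]
    (Q : E →ₗ[𝕜] E →ₗ[𝕜] E) (L : E →ₗ[𝕜] E) (c x : E) :
    HasFDerivAt (fun y => Q y y + L y + c)
      (LinearMap.toContinuousLinearMap (Q x + Q.flip x + L)) x := by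
  let B : E →L[𝕜] E →L[𝕜] E :=
    LinearMap.toContinuousLinearMap (LinearMap.toContinuousLinearMap.toLinearMap ∘ₗ Q)
  have hB : HasFDerivAt (fun y => B y y) ((B x).comp (.id 𝕜 E) + B.flip x) x :=
    B.hasFDerivAt.clm_apply (hasFDerivAt_id x)
  have hf : HasFDerivAt (fun y => Q y y + L y + c)
      ((B x).comp (.id 𝕜 E) + B.flip x + LinearMap.toContinuousLinearMap L) x :=
    (hB.add (LinearMap.toContinuousLinearMap L).hasFDerivAt).add_const c
  exact hf.congr_fderiv (by ext v; simp [B])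

end Quadratic

theorem kahan_rosenbrock_form_general (n : ℕ) (f : (Fin n → ℝ) → (Fin n → ℝ))
    (Q : (Fin n → ℝ) →ₗ[ℝ] (Fin n → ℝ) →ₗ[ℝ] (Fin n → ℝ))
    (L : (Fin n → ℝ) →ₗ[ℝ] (Fin n → ℝ)) (c : Fin n → ℝ)
    (hf : ∀ x, f x = Q x x + L x + c)
    (h : ℝ) (hh : h ≠ 0) (x x' : Fin n → ℝ)
    (hinv : IsUnit ((1 : (Fin n → ℝ) →L[ℝ] (Fin n → ℝ)) - (h/2) • fderiv ℝ f x))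
    (hx' : x' = x + h • (Ring.inverse
      ((1 : (Fin n → ℝ) →L[ℝ] (Fin n → ℝ)) - (h/2) • fderiv ℝ f x)) (f x)) :
    (1/h) • (x' - x) =
      (2 : ℝ) • f ((1/2 : ℝ) • (x + x')) - (1/2 : ℝ) • f x - (1/2 : ℝ) • f x' := by
  set A := (1 : (Fin n → ℝ) →L[ℝ] (Fin n → ℝ)) - (h/2) • fderiv ℝ f x
  set z := Ring.inverse A (f x)
  have hderiv : fderiv ℝ f x = LinearMap.toContinuousLinearMap (Q x + Q.flip x + L) := by
    rw [funext hf]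
    exact (hasFDerivAt_quadratic Q L c x).fderiv
  have hstep : x' - x = h • z := by rw [hx', add_sub_cancel_left]
  have hz : z - (h/2) • fderiv ℝ f x z = f x := congr($(Ring.mul_inverse_cancel A hinv) (f x))
  rw [hderiv, LinearMap.coe_toContinuousLinearMap'] at hz
  rw [kahan_combination_of_quadratic hf, hstep, smul_smul, one_div_mul_cancel hh, one_smul, map_smul,
    ← hz]
  module

/-- For a quadratic vector field `f` on `ℝⁿ`, if `I - (h/2) f'(x)` is
invertible and `x' = x + h (I - (h/2) f'(x))⁻¹ f(x)` (Rosenbrock form), then `x'`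
satisfies the Kahan equation `(x'-x)/h = 2 f((x+x')/2) - (1/2) f(x) - (1/2) f(x')`. -/
theorem kahan_rosenbrock_form (n : ℕ) (f : (Fin n → ℝ) → (Fin n → ℝ))
    (Q : (Fin n → ℝ) →ₗ[ℝ] (Fin n → ℝ) →ₗ[ℝ] (Fin n → ℝ))
    (L : (Fin n → ℝ) →ₗ[ℝ] (Fin n → ℝ)) (c : Fin n → ℝ)
    (hQ : ∀ x y, Q x y = Q y x)
    (hf : ∀ x, f x = Q x x + L x + c)
    (h : ℝ) (hh : h ≠ 0) (x x' : Fin n → ℝ)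
    (hinv : IsUnit ((1 : (Fin n → ℝ) →L[ℝ] (Fin n → ℝ)) - (h/2) • fderiv ℝ f x))
    (hx' : x' = x + h • (Ring.inverse
      ((1 : (Fin n → ℝ) →L[ℝ] (Fin n → ℝ)) - (h/2) • fderiv ℝ f x)) (f x)) :
    (1/h) • (x' - x) =
      (2 : ℝ) • f ((1/2 : ℝ) • (x + x')) - (1/2 : ℝ) • f x - (1/2 : ℝ) • f x' :=
  kahan_rosenbrock_form_general n f Q L c hf h hh x x' hinv hx'
end

section
/- Consider the Ishii system on ℝ³: ẋ = y, ẏ = z, ż = 12xy, i.e. f(x,y,z) = (y, z, 12xy). Let (x',y',z') be defined by the Kahan equations (x'-x)/h = (y+y')/2, (y'-y)/h = (z+z')/2, (z'-z)/h = 6(xy' + x'y). Then H̃₁ = z - 6x² + (3/2)h²y² and H̃₂ = xz - (1/2)y² - 4x³ + h²(xy² + z²/24) are both preserved: H̃₁(x',y',z') = H̃₁(x,y,z) and H̃₂(x',y',z') = H̃₂(x,y,z). -/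
/-!
With `m = (a, b, c)` the midpoint of a Kahan step, the equations say `p' - p = h f̃(m)` for the
modified field `f̃(a, b, c) = (b, c, 12ab - 3h²bc)`; the correction term comes from the
polarisation `xy' + x'y = 2ab - (x' - x)(y' - y)/2`. Hence `p = m - (h/2) f̃(m)` and
`p' = m + (h/2) f̃(m)`, and preservation of each `H̃ᵢ` becomes the polynomial identity
`H̃ᵢ(m + (h/2) f̃(m)) = H̃ᵢ(m - (h/2) f̃(m))` in `a, b, c, h`.
-/

namespace Ishii

variable {K : Type*} [Field K] [CharZero K]

def modifiedH₁ (h x y z : K) : K := z - 6 * x ^ 2 + (3 / 2) * h ^ 2 * y ^ 2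

def modifiedH₂ (h x y z : K) : K :=
  x * z - (1 / 2) * y ^ 2 - 4 * x ^ 3 + h ^ 2 * (x * y ^ 2 + z ^ 2 / 24)

theorem exists_midpoint_of_kahan {h x y z x' y' z' : K}
    (e₁ : x' - x = (y + y') / 2 * h)
    (e₂ : y' - y = (z + z') / 2 * h)
    (e₃ : z' - z = 6 * (x * y' + x' * y) * h) :
    ∃ a b c : K,
      x = a - h / 2 * b ∧ x' = a + h / 2 * b ∧
      y = b - h / 2 * c ∧ y' = b + h / 2 * c ∧
      z = c - h / 2 * (12 * a * b - 3 * h ^ 2 * b * c) ∧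
      z' = c + h / 2 * (12 * a * b - 3 * h ^ 2 * b * c) := by
  have e₃_midpoint : z' - z = h * (12 * ((x + x') / 2) * ((y + y') / 2)
      - 3 * h ^ 2 * ((y + y') / 2) * ((z + z') / 2)) := by
    linear_combination e₃ - 3 * h * (x' - x) * e₂ - 3 * h ^ 2 * ((z + z') / 2) * e₁
  refine ⟨(x + x') / 2, (y + y') / 2, (z + z') / 2, ?_, ?_, ?_, ?_, ?_, ?_⟩
  · linear_combination (-1 / 2 : K) * e₁
  · linear_combination (1 / 2 : K) * e₁
  · linear_combination (-1 / 2 : K) * e₂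
  · linear_combination (1 / 2 : K) * e₂
  · linear_combination (-1 / 2 : K) * e₃_midpoint
  · linear_combination (1 / 2 : K) * e₃_midpoint

theorem modifiedH₁_midpoint_symm (h a b c : K) :
    modifiedH₁ h (a + h / 2 * b) (b + h / 2 * c)
        (c + h / 2 * (12 * a * b - 3 * h ^ 2 * b * c)) =
      modifiedH₁ h (a - h / 2 * b) (b - h / 2 * c)
        (c - h / 2 * (12 * a * b - 3 * h ^ 2 * b * c)) := by
  unfold modifiedH₁
  ring

theorem modifiedH₂_midpoint_symm (h a b c : K) :
    modifiedH₂ h (a + h / 2 * b) (b + h / 2 * c)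
        (c + h / 2 * (12 * a * b - 3 * h ^ 2 * b * c)) =
      modifiedH₂ h (a - h / 2 * b) (b - h / 2 * c)
        (c - h / 2 * (12 * a * b - 3 * h ^ 2 * b * c)) := by
  unfold modifiedH₂
  ring

end Ishii

/-- The Kahan discretization of the Ishii system
`ẋ = y, ẏ = z, ż = 12xy` exactly preserves the modified invariants
`H̃₁ = z - 6x² + (3/2)h²y²` and `H̃₂ = xz - (1/2)y² - 4x³ + h²(xy² + z²/24)`. -/
theorem kahan_ishii_invariants (h x y z x' y' z' : ℝ) (hh : h ≠ 0)
    (e₁ : (x' - x) / h = (y + y') / 2)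
    (e₂ : (y' - y) / h = (z + z') / 2)
    (e₃ : (z' - z) / h = 6 * (x * y' + x' * y)) :
    (z' - 6 * x'^2 + (3/2) * h^2 * y'^2 = z - 6 * x^2 + (3/2) * h^2 * y^2) ∧
    (x' * z' - (1/2) * y'^2 - 4 * x'^3 + h^2 * (x' * y'^2 + z'^2 / 24) =
      x * z - (1/2) * y^2 - 4 * x^3 + h^2 * (x * y^2 + z^2 / 24)) := by
  rw [div_eq_iff hh] at e₁ e₂ e₃
  obtain ⟨a, b, c, rfl, rfl, rfl, rfl, rfl, rfl⟩ := Ishii.exists_midpoint_of_kahan e₁ e₂ e₃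
  exact ⟨Ishii.modifiedH₁_midpoint_symm h a b c,
    Ishii.modifiedH₂_midpoint_symm h a b c⟩
end

section
/- The Ishii vector field f(x,y,z) = (y, z, 12xy) is divergence-free, and the Jacobian determinant of its Kahan map equals 1: if (x',y',z') is given by the Kahan update (x'-x)/h = (y+y')/2, (y'-y)/h = (z+z')/2, (z'-z)/h = 6(xy'+x'y), then det(∂(x',y',z')/∂(x,y,z)) = 1 wherever the map is defined. -/
/-!
Write `A(p) = 1 - (h/2) f'(p)` and `w = A(p)⁻¹ f(p)`, so that `Φ(p) = p + h w`. For a quadratic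
field, `f'` is affine with a constant symmetric linear part `B = f''`, so differentiating
`A(p)⁻¹` gives `Φ'(p) v = v + h A⁻¹ f'(p) v + (h²/2) A⁻¹ B w v`; since
`f'(Φ p) = f'(p) + h B w`, this is `Φ'(p) = A(p)⁻¹ (1 + (h/2) f'(Φ p))`. Hence `det Φ'(p) = 1`
as soon as `det (1 + (h/2) f'(Φ p)) = det (1 - (h/2) f'(p))`. For the Ishii field
`det (1 + c f'(x, y, z)) = 1 - 12 c² x + 12 c³ y`, and the two determinants agree exactly because
of the first Kahan equation `x' - x = (h/2)(y + y')`.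
-/

open ContinuousLinearMap

section KahanMap

variable {𝕜 E : Type*} [RCLike 𝕜] [NormedAddCommGroup E] [NormedSpace 𝕜 E]

noncomputable def kahanMap (h : 𝕜) (f : E → E) (p : E) : E :=
  p + h • Ring.inverse (1 - (h / 2) • fderiv 𝕜 f p) (f p)

theorem kahanMap_sub_self {h : 𝕜} {f : E → E} {p : E}
    (hA : IsUnit (1 - (h / 2) • fderiv 𝕜 f p)) :
    (1 - (h / 2) • fderiv 𝕜 f p) (kahanMap h f p - p) = h • f p := by
  rw [kahanMap, add_sub_cancel_left, map_smul, ← mul_apply_eq_comp,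
    Ring.mul_inverse_cancel _ hA, one_apply_eq_self]

variable [CompleteSpace E]

theorem hasFDerivAt_kahanMap {f : E → E} {B : E →L[𝕜] E →L[𝕜] E} (hf : Differentiable 𝕜 f)
    (hB : ∀ p v, fderiv 𝕜 f (p + v) = fderiv 𝕜 f p + B v) {h : 𝕜} {p : E}
    (hA : IsUnit (1 - (h / 2) • fderiv 𝕜 f p)) :
    HasFDerivAt (kahanMap h f)
      (Ring.inverse (1 - (h / 2) • fderiv 𝕜 f p) * (1 + (h / 2) • fderiv 𝕜 f (kahanMap h f p)))
      p := by
  have hB_deriv : ∀ q, HasFDerivAt (fderiv 𝕜 f) B q := by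
    intro q
    have : fderiv 𝕜 f = fun x => fderiv 𝕜 f 0 + B x := funext fun x => by simpa using hB 0 x
    rw [this]
    exact B.hasFDerivAt.const_add _
  have hB_symm : ∀ u v, B u v = B v u :=
    second_derivative_symmetric (fun q => (hf q).hasFDerivAt) (hB_deriv p)
  obtain ⟨U, hU⟩ := hA
  have hinv : HasFDerivAt (fun q => Ring.inverse (1 - (h / 2) • fderiv 𝕜 f q))
      ((-mulLeftRight 𝕜 (E →L[𝕜] E) ↑U⁻¹ ↑U⁻¹).comp (-((h / 2) • B))) p := by
    have := hasFDerivAt_ringInverse (𝕜 := 𝕜) U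
    rw [hU] at this
    exact this.comp p (((hB_deriv p).const_smul (h / 2)).const_sub 1)
  refine ((hasFDerivAt_id p).add
    ((hinv.clm_apply (hf p).hasFDerivAt).const_smul h)).congr_fderiv ?_
  rw [kahanMap, hB, ← hU, Ring.inverse_unit]
  ext v
  have hv : (↑U⁻¹ : E →L[𝕜] E) v - (h / 2) • (↑U⁻¹ : E →L[𝕜] E) (fderiv 𝕜 f p v) = v := by
    simpa [hU] using congr($(U.inv_mul) v)
  simp only [add_apply, one_apply_eq_self, smul_apply, mul_apply_eq_comp, coe_id', id_eq,
    comp_apply, flip_apply, neg_apply, mulLeftRight_apply, map_add, map_neg, map_smul,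
    hB_symm v]
  linear_combination (norm := module) -hv

theorem det_fderiv_kahanMap_eq_one {f : E → E} {B : E →L[𝕜] E →L[𝕜] E}
    (hf : Differentiable 𝕜 f) (hB : ∀ p v, fderiv 𝕜 f (p + v) = fderiv 𝕜 f p + B v) {h : 𝕜}
    {p : E} (hA : IsUnit (1 - (h / 2) • fderiv 𝕜 f p))
    (hdet : LinearMap.det ((1 + (h / 2) • fderiv 𝕜 f (kahanMap h f p) : E →L[𝕜] E) : E →ₗ[𝕜] E) =
      LinearMap.det ((1 - (h / 2) • fderiv 𝕜 f p : E →L[𝕜] E) : E →ₗ[𝕜] E)) :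
    LinearMap.det (fderiv 𝕜 (kahanMap h f) p : E →ₗ[𝕜] E) = 1 := by
  rw [(hasFDerivAt_kahanMap hf hB hA).fderiv, toLinearMap_mul, map_mul, hdet, ← map_mul,
    ← toLinearMap_mul, Ring.inverse_mul_cancel _ hA, toLinearMap_one, map_one]

end KahanMap

section Ishii

local notation "ℝ³" => Fin 3 → ℝ

def ishii (p : ℝ³) : ℝ³ := ![p 1, p 2, 12 * p 0 * p 1]

def ishiiJacobian (p : ℝ³) : Matrix (Fin 3) (Fin 3) ℝ :=
  !![0, 1, 0; 0, 0, 1; 12 * p 1, 12 * p 0, 0]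

-- The second derivative of `ishii`: `ishiiHessian v u = 12 (v 1 * u 0 + v 0 * u 1) • e₂`.
noncomputable def ishiiHessian : ℝ³ →L[ℝ] ℝ³ →L[ℝ] ℝ³ :=
  (12 : ℝ) • ((proj 1).smulRight ((proj 0).smulRight (Pi.single 2 1)) +
    (proj 0).smulRight ((proj 1).smulRight (Pi.single 2 1)))

theorem hasFDerivAt_ishii (p : ℝ³) :
    HasFDerivAt ishii (Matrix.toLin' (ishiiJacobian p)).toContinuousLinearMap p := by
  refine hasFDerivAt_pi'' fun i => ?_
  fin_cases i
  · refine (hasFDerivAt_apply 1 p).congr_fderiv ?_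
    ext v; simp [ishiiJacobian, dotProduct, Fin.sum_univ_three]
  · refine (hasFDerivAt_apply 2 p).congr_fderiv ?_
    ext v; simp [ishiiJacobian, dotProduct, Fin.sum_univ_three]
  · refine (((hasFDerivAt_apply 0 p).const_mul (12 : ℝ)).mul
      (hasFDerivAt_apply 1 p)).congr_fderiv ?_
    ext v; simp [ishiiJacobian, dotProduct, Fin.sum_univ_three]; ring

theorem fderiv_ishii (p : ℝ³) :
    fderiv ℝ ishii p = (Matrix.toLin' (ishiiJacobian p)).toContinuousLinearMap :=
  (hasFDerivAt_ishii p).fderiv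

theorem differentiable_ishii : Differentiable ℝ ishii :=
  fun p => (hasFDerivAt_ishii p).differentiableAt

theorem fderiv_ishii_add (p v : ℝ³) :
    fderiv ℝ ishii (p + v) = fderiv ℝ ishii p + ishiiHessian v := by
  ext u i
  fin_cases i
  all_goals simp [fderiv_ishii, ishiiJacobian, ishiiHessian, Matrix.mulVec, dotProduct,
    Fin.sum_univ_three]
  ring

theorem sum_fderiv_ishii_single_apply_self (p : ℝ³) :
    ∑ i : Fin 3, fderiv ℝ ishii p (Pi.single i 1) i = 0 := by
  simp [fderiv_ishii, ishiiJacobian, Fin.sum_univ_three]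

theorem det_one_add_smul_fderiv_ishii (c : ℝ) (q : ℝ³) :
    LinearMap.det ((1 + c • fderiv ℝ ishii q : ℝ³ →L[ℝ] ℝ³) : ℝ³ →ₗ[ℝ] ℝ³) =
      1 - 12 * c ^ 2 * q 0 + 12 * c ^ 3 * q 1 := by
  rw [fderiv_ishii, toLinearMap_add, toLinearMap_one, toLinearMap_smul,
    LinearMap.coe_toContinuousLinearMap, Module.End.one_eq_id, ← Matrix.toLin'_one, ← map_smul,
    ← map_add, LinearMap.det_toLin', Matrix.det_fin_three]
  simp [ishiiJacobian]
  ring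

theorem det_one_add_fderiv_ishii_kahanMap {h : ℝ} {p : ℝ³}
    (hA : IsUnit (1 - (h / 2) • fderiv ℝ ishii p)) :
    LinearMap.det ((1 + (h / 2) • fderiv ℝ ishii (kahanMap h ishii p) : ℝ³ →L[ℝ] ℝ³) :
        ℝ³ →ₗ[ℝ] ℝ³) =
      LinearMap.det ((1 - (h / 2) • fderiv ℝ ishii p : ℝ³ →L[ℝ] ℝ³) : ℝ³ →ₗ[ℝ] ℝ³) := by
  have hx : kahanMap h ishii p 0 - p 0 - h / 2 * (kahanMap h ishii p 1 - p 1) = h * p 1 := by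
    simpa [fderiv_ishii, ishiiJacobian, ishii, Matrix.vecHead, Matrix.vecTail] using
      congr_fun (kahanMap_sub_self hA) 0
  rw [sub_eq_add_neg, ← neg_smul (h / 2) (fderiv ℝ ishii p), det_one_add_smul_fderiv_ishii,
    det_one_add_smul_fderiv_ishii]
  linear_combination (-3 * h ^ 2) * hx

end Ishii

theorem kahan_ishii_volume_preserving_general (h : ℝ)
    (f : (Fin 3 → ℝ) → (Fin 3 → ℝ))
    (hf : ∀ p, f p = ![p 1, p 2, 12 * p 0 * p 1])
    (Φ : (Fin 3 → ℝ) → (Fin 3 → ℝ))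
    (hΦ : ∀ p, Φ p = p + h • (Ring.inverse
      ((1 : (Fin 3 → ℝ) →L[ℝ] (Fin 3 → ℝ)) - (h/2) • fderiv ℝ f p)) (f p)) :
    (∀ p : Fin 3 → ℝ, ∑ i : Fin 3, fderiv ℝ f p (Pi.single i 1) i = 0) ∧
    (∀ p : Fin 3 → ℝ,
      IsUnit ((1 : (Fin 3 → ℝ) →L[ℝ] (Fin 3 → ℝ)) - (h/2) • fderiv ℝ f p) →
      LinearMap.det ((fderiv ℝ Φ p : (Fin 3 → ℝ) →L[ℝ] (Fin 3 → ℝ)) :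
        (Fin 3 → ℝ) →ₗ[ℝ] (Fin 3 → ℝ)) = 1) := by
  obtain rfl : f = ishii := funext hf
  obtain rfl : Φ = kahanMap h ishii := funext hΦ
  exact ⟨sum_fderiv_ishii_single_apply_self, fun p hA =>
    det_fderiv_kahanMap_eq_one differentiable_ishii fderiv_ishii_add hA
      (det_one_add_fderiv_ishii_kahanMap hA)⟩

/-- The Ishii vector field `f(x,y,z) = (y, z, 12xy)` is divergence-free,
and the Jacobian determinant of its Kahan map
`Φ(p) = p + h (I - (h/2) f'(p))⁻¹ f(p)` equals 1 wherever the map is defined. -/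
theorem kahan_ishii_volume_preserving (h : ℝ) (hh : h ≠ 0)
    (f : (Fin 3 → ℝ) → (Fin 3 → ℝ))
    (hf : ∀ p, f p = ![p 1, p 2, 12 * p 0 * p 1])
    (Φ : (Fin 3 → ℝ) → (Fin 3 → ℝ))
    (hΦ : ∀ p, Φ p = p + h • (Ring.inverse
      ((1 : (Fin 3 → ℝ) →L[ℝ] (Fin 3 → ℝ)) - (h/2) • fderiv ℝ f p)) (f p)) :
    (∀ p : Fin 3 → ℝ, ∑ i : Fin 3, fderiv ℝ f p (Pi.single i 1) i = 0) ∧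
    (∀ p : Fin 3 → ℝ,
      IsUnit ((1 : (Fin 3 → ℝ) →L[ℝ] (Fin 3 → ℝ)) - (h/2) • fderiv ℝ f p) →
      LinearMap.det ((fderiv ℝ Φ p : (Fin 3 → ℝ) →L[ℝ] (Fin 3 → ℝ)) :
        (Fin 3 → ℝ) →ₗ[ℝ] (Fin 3 → ℝ)) = 1) :=
  kahan_ishii_volume_preserving_general h f hf Φ hΦ
end

section
/- Consider the generalized Ishii system ẋ = -c₂x + b₂y + b₃z, ẏ = c₁x + c₂y + c₃z, ż = a₁₁x² + a₁₂xy + a₂₂y², with a₁₁ = kA₂c₃, a₁₂ = -k(A₁c₃ + A₂b₃), a₂₂ = kA₁b₃, where A₁ = b₂c₃ - b₃c₂ and A₂ = c₂c₃ + b₃c₁. Then H₁ = z + (k/2)(c₃x - b₃y)² and H₂ = (k/3)(c₃x - b₃y)³ + (c₁/2)x² + c₂xy + c₃xz - (b₂/2)y² - b₃yz are first integrals: their derivative along the vector field vanishes identically. -/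
/-!
Write `u = c₃x - b₃y`. Along the field `u̇ = A₁y - A₂x` and the third component factors as
`ż = -k u u̇`, which is exactly the conservation of `H₁ = z + (k/2)u²`. The quadratic part `Q` of
`H₂` satisfies `∂Q/∂x = ẏ`, `∂Q/∂y = -ẋ`, `∂Q/∂z = u`, so `Q̇ = u ż = -k u² u̇`, which cancels the
derivative of `(k/3)u³`.
-/

namespace GeneralizedIshii

def field (b₂ b₃ c₁ c₂ c₃ k A₁ A₂ : ℝ) (p : Fin 3 → ℝ) : Fin 3 → ℝ :=
  ![-c₂ * p 0 + b₂ * p 1 + b₃ * p 2,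
    c₁ * p 0 + c₂ * p 1 + c₃ * p 2,
    k * A₂ * c₃ * (p 0)^2 - k * (A₁ * c₃ + A₂ * b₃) * p 0 * p 1 + k * A₁ * b₃ * (p 1)^2]

noncomputable def H₁ (b₃ c₃ k : ℝ) (p : Fin 3 → ℝ) : ℝ :=
  p 2 + (k/2) * (c₃ * p 0 - b₃ * p 1)^2

noncomputable def H₂ (b₂ b₃ c₁ c₂ c₃ k : ℝ) (p : Fin 3 → ℝ) : ℝ :=
  (k/3) * (c₃ * p 0 - b₃ * p 1)^3 + (c₁/2) * (p 0)^2
    + c₂ * p 0 * p 1 + c₃ * p 0 * p 2 - (b₂/2) * (p 1)^2 - b₃ * p 1 * p 2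

theorem field_two_eq {b₂ b₃ c₁ c₂ c₃ k A₁ A₂ : ℝ} (hA₁ : A₁ = b₂ * c₃ - b₃ * c₂)
    (hA₂ : A₂ = c₂ * c₃ + b₃ * c₁) (p : Fin 3 → ℝ) :
    field b₂ b₃ c₁ c₂ c₃ k A₁ A₂ p 2 = -k * (c₃ * p 0 - b₃ * p 1) *
      (c₃ * field b₂ b₃ c₁ c₂ c₃ k A₁ A₂ p 0 - b₃ * field b₂ b₃ c₁ c₂ c₃ k A₁ A₂ p 1) := by
  subst hA₁ hA₂
  simp only [field, Matrix.cons_val_zero, Matrix.cons_val_one, Matrix.cons_val_two,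
    Matrix.head_cons, Matrix.tail_cons]
  ring

theorem fderiv_H₁_apply (b₃ c₃ k : ℝ) (p v : Fin 3 → ℝ) :
    fderiv ℝ (H₁ b₃ c₃ k) p v = v 2 + k * (c₃ * p 0 - b₃ * p 1) * (c₃ * v 0 - b₃ * v 1) := by
  have hu := ((hasFDerivAt_apply (𝕜 := ℝ) 0 p).const_mul c₃).fun_sub
    ((hasFDerivAt_apply (𝕜 := ℝ) 1 p).const_mul b₃)
  have hH : HasFDerivAt (H₁ b₃ c₃ k) _ p :=
    (hasFDerivAt_apply 2 p).fun_add ((hu.pow 2).const_mul (k/2))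
  rw [hH.fderiv]
  simp only [nsmul_eq_mul, add_apply, sub_apply, smul_apply, ContinuousLinearMap.proj_apply,
    smul_eq_mul]
  ring

theorem fderiv_H₂_apply (b₂ b₃ c₁ c₂ c₃ k : ℝ) (p v : Fin 3 → ℝ) :
    fderiv ℝ (H₂ b₂ b₃ c₁ c₂ c₃ k) p v =
      k * (c₃ * p 0 - b₃ * p 1)^2 * (c₃ * v 0 - b₃ * v 1)
        + (c₁ * p 0 + c₂ * p 1 + c₃ * p 2) * v 0 + (c₂ * p 0 - b₂ * p 1 - b₃ * p 2) * v 1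
        + (c₃ * p 0 - b₃ * p 1) * v 2 := by
  have hx := hasFDerivAt_apply (𝕜 := ℝ) 0 p
  have hy := hasFDerivAt_apply (𝕜 := ℝ) 1 p
  have hz := hasFDerivAt_apply (𝕜 := ℝ) 2 p
  have hu := (hx.const_mul c₃).fun_sub (hy.const_mul b₃)
  have hH : HasFDerivAt (H₂ b₂ b₃ c₁ c₂ c₃ k) _ p :=
    (((((hu.pow 3).const_mul (k/3)).fun_add ((hx.pow 2).const_mul (c₁/2))).fun_add
      ((hx.const_mul c₂).fun_mul hy)).fun_add ((hx.const_mul c₃).fun_mul hz)).fun_sub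
      ((hy.pow 2).const_mul (b₂/2)) |>.fun_sub ((hy.const_mul b₃).fun_mul hz)
  rw [hH.fderiv]
  simp only [nsmul_eq_mul, add_apply, sub_apply, smul_apply, ContinuousLinearMap.proj_apply,
    smul_eq_mul]
  ring

end GeneralizedIshii

/-- For the generalized Ishii system with the parametrized coefficients
`a₁₁ = kA₂c₃`, `a₁₂ = -k(A₁c₃ + A₂b₃)`, `a₂₂ = kA₁b₃` (with `A₁ = b₂c₃ - b₃c₂`,
`A₂ = c₂c₃ + b₃c₁`), the functions `H₁ = z + (k/2)(c₃x - b₃y)²` and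
`H₂ = (k/3)(c₃x - b₃y)³ + (c₁/2)x² + c₂xy + c₃xz - (b₂/2)y² - b₃yz` are first
integrals: their derivatives along the vector field vanish identically. -/
theorem generalized_ishii_first_integrals (b₂ b₃ c₁ c₂ c₃ k : ℝ)
    (A₁ A₂ : ℝ) (hA₁ : A₁ = b₂ * c₃ - b₃ * c₂) (hA₂ : A₂ = c₂ * c₃ + b₃ * c₁)
    (f : (Fin 3 → ℝ) → (Fin 3 → ℝ))
    (hf : ∀ p, f p = ![-c₂ * p 0 + b₂ * p 1 + b₃ * p 2,
                       c₁ * p 0 + c₂ * p 1 + c₃ * p 2,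
                       k * A₂ * c₃ * (p 0)^2 - k * (A₁ * c₃ + A₂ * b₃) * p 0 * p 1
                         + k * A₁ * b₃ * (p 1)^2])
    (H₁ H₂ : (Fin 3 → ℝ) → ℝ)
    (hH₁ : ∀ p, H₁ p = p 2 + (k/2) * (c₃ * p 0 - b₃ * p 1)^2)
    (hH₂ : ∀ p, H₂ p = (k/3) * (c₃ * p 0 - b₃ * p 1)^3 + (c₁/2) * (p 0)^2
        + c₂ * p 0 * p 1 + c₃ * p 0 * p 2 - (b₂/2) * (p 1)^2 - b₃ * p 1 * p 2) :
    ∀ p : Fin 3 → ℝ, fderiv ℝ H₁ p (f p) = 0 ∧ fderiv ℝ H₂ p (f p) = 0 := by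
  obtain rfl : f = GeneralizedIshii.field b₂ b₃ c₁ c₂ c₃ k A₁ A₂ := funext hf
  obtain rfl : H₁ = GeneralizedIshii.H₁ b₃ c₃ k := funext hH₁
  obtain rfl : H₂ = GeneralizedIshii.H₂ b₂ b₃ c₁ c₂ c₃ k := funext hH₂
  intro p
  have hz := GeneralizedIshii.field_two_eq (k := k) hA₁ hA₂ p
  refine ⟨?_, ?_⟩
  · rw [GeneralizedIshii.fderiv_H₁_apply]
    linear_combination hz
  · rw [GeneralizedIshii.fderiv_H₂_apply]
    simp only [GeneralizedIshii.field, Matrix.cons_val_zero, Matrix.cons_val_one,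
      Matrix.cons_val_two, Matrix.head_cons, Matrix.tail_cons] at hz ⊢
    linear_combination (c₃ * p 0 - b₃ * p 1) * hz
end

section
/- The substitution x_n = -u_n + 1/(3h²) transforms the recurrence x_{n-1} + x_{n+1} = (2x_n + h²t_n)/(1 - 3h²x_n) with t_n = nh into u_{n+1} + u_{n-1} = -((t_n/3) + 2/(9h⁴))/u_n + 4/(3h²), valid whenever u_n ≠ 0 and h ≠ 0. -/
theorem one_sub_mul_neg_add_one_div {K : Type*} [Field K] {c : K} (hc : c ≠ 0) (u : K) :
    1 - c * (-u + 1 / c) = c * u := by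
  rw [mul_add, mul_one_div_cancel hc]
  ring

theorem discrete_painleve_I_form_general (h : ℝ) (hh : h ≠ 0)
    (xm xn xp um un up tn : ℝ)
    (hxm : xm = -um + 1 / (3 * h^2))
    (hxn : xn = -un + 1 / (3 * h^2))
    (hxp : xp = -up + 1 / (3 * h^2))
    (hun : un ≠ 0)
    (hrec : xm + xp = (2 * xn + h^2 * tn) / (1 - 3 * h^2 * xn)) :
    up + um = -((tn / 3) + 2 / (9 * h^4)) / un + 4 / (3 * h^2) := by
  have hc : (3 : ℝ) * h ^ 2 ≠ 0 := by positivity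
  rw [hxn, one_sub_mul_neg_add_one_div hc, hxm, hxp] at hrec
  field_simp at hrec ⊢
  linear_combination -3 * hrec

/-- The substitution `x_n = -u_n + 1/(3h²)` transforms the recurrence
`x_{n-1} + x_{n+1} = (2x_n + h²t_n)/(1 - 3h²x_n)` (with `t_n = nh`) into the
discrete Painlevé I form `u_{n+1} + u_{n-1} = -((t_n/3) + 2/(9h⁴))/u_n + 4/(3h²)`. -/
theorem discrete_painleve_I_form (h : ℝ) (hh : h ≠ 0) (n : ℤ)
    (xm xn xp um un up tn : ℝ) (htn : tn = (n : ℝ) * h)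
    (hxm : xm = -um + 1 / (3 * h^2))
    (hxn : xn = -un + 1 / (3 * h^2))
    (hxp : xp = -up + 1 / (3 * h^2))
    (hun : un ≠ 0)
    (hrec : xm + xp = (2 * xn + h^2 * tn) / (1 - 3 * h^2 * xn)) :
    up + um = -((tn / 3) + 2 / (9 * h^4)) / un + 4 / (3 * h^2) :=
  discrete_painleve_I_form_general h hh xm xn xp um un up tn hxm hxn hxp hun hrec
end

section
/- Consider the extended Ishii system ẋ = y, ẏ = z, ż = 12xy + A for a constant A, with Kahan update (x'-x)/h = (y+y')/2, (y'-y)/h = (z+z')/2, (z'-z)/h = 6(xy'+x'y) + A. Then the quantity I(x,y,z) = z - 6x² + (3/2)h²y² satisfies I(x',y',z') = I(x,y,z) + hA. -/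
/-! By the first Kahan equation, `-6 (x'² - x²)` equals `-3h (x + x') (y + y')`, which differs from
the Kahan increment `6h (x y' + x' y)` of `z` by `3h (x' - x) (y' - y)`. Multiplying the first two
Kahan equations turns this defect into `(3/4) h³ (y + y') (z + z') = (3/2) h² (y'² - y²)`, the increment
of the correction term, so only `hA` survives. -/

theorem kahan_ishii_increment {K : Type*} [Field K] [CharZero K] {A h x y z x' y' z' : K}
    (hx : x' - x = (y + y') / 2 * h) (hy : y' - y = (z + z') / 2 * h)
    (hz : z' - z = (6 * (x * y' + x' * y) + A) * h) :
    z' - 6 * x' ^ 2 + 3 / 2 * h ^ 2 * y' ^ 2 = z - 6 * x ^ 2 + 3 / 2 * h ^ 2 * y ^ 2 + h * A := by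
  linear_combination hz - 6 * (x' + x) * hx + 3 / 2 * h ^ 2 * (y' + y) * hy
    - 3 * h * (x' - x) * hy - 3 / 2 * h ^ 2 * (z + z') * hx

/-- For the extended Ishii system `ẋ = y, ẏ = z, ż = 12xy + A`,
the Kahan update changes `I(x,y,z) = z - 6x² + (3/2)h²y²` by exactly `hA`. -/
theorem kahan_extended_ishii (A h x y z x' y' z' : ℝ) (hh : h ≠ 0)
    (e₁ : (x' - x) / h = (y + y') / 2)
    (e₂ : (y' - y) / h = (z + z') / 2)
    (e₃ : (z' - z) / h = 6 * (x * y' + x' * y) + A) :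
    z' - 6 * x'^2 + (3/2) * h^2 * y'^2 =
      (z - 6 * x^2 + (3/2) * h^2 * y^2) + h * A :=
  kahan_ishii_increment ((div_eq_iff hh).1 e₁) ((div_eq_iff hh).1 e₂) ((div_eq_iff hh).1 e₃)
end

section
/- Let ℓ(x) = uᵀx be homogeneous linear on ℝⁿ with u constant. If x, x' satisfy the Kahan equation for the Suslov field f(x) = ℓ(x)J∇H(x) with H homogeneous quadratic and J constant skew-symmetric, then ∇H(x)ᵀ(x'ℓ(x) + xℓ(x')) = ∇H(x')ᵀ(x'ℓ(x) + xℓ(x')). -/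
open Matrix

/-! Kahan's scheme replaces a quadratic vector field `f(x) = Q(x, x)` by its polarization
`Q(x, x')`. For the Suslov field this turns the Kahan equation into `x' - x = (h/2) J A v` with
`v = ℓ(x) x' + ℓ(x') x`. Contracting with `A v` kills the right-hand side by skew-symmetry of `J`,
and symmetry of `A` moves `A` onto `x' - x`. -/

theorem kahan_combination_eq_polarization {ι K : Type*} [Fintype ι] [Field K] [NeZero (2 : K)]
    (u : ι → K) (M : Matrix ι ι K) (x x' : ι → K) :
    -((1/2 : K) • (u ⬝ᵥ x) • M *ᵥ x)
      + (2 : K) • (u ⬝ᵥ (1/2 : K) • (x + x')) • M *ᵥ ((1/2 : K) • (x + x'))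
      - (1/2 : K) • (u ⬝ᵥ x') • M *ᵥ x' =
      (1/2 : K) • M *ᵥ ((u ⬝ᵥ x) • x' + (u ⬝ᵥ x') • x) := by
  simp only [dotProduct_smul, dotProduct_add, mulVec_smul, mulVec_add, smul_eq_mul]
  match_scalars <;> field_simp <;> ring

theorem mulVec_dotProduct_self_eq_zero_of_transpose_eq_neg {ι R : Type*} [Fintype ι]
    [CommRing R] [IsAddTorsionFree R] {J : Matrix ι ι R} (hJ : Jᵀ = -J) (w : ι → R) :
    J *ᵥ w ⬝ᵥ w = 0 :=
  self_eq_neg.mp <| calc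
    J *ᵥ w ⬝ᵥ w = w ᵥ* J ⬝ᵥ w := by rw [dotProduct_comm, dotProduct_mulVec]
    _ = -(J *ᵥ w ⬝ᵥ w) := by rw [← mulVec_transpose, hJ, neg_mulVec, neg_dotProduct]

/-- If `x, x'` satisfy the Kahan equation for the Suslov vector
field `f(x) = ℓ(x)J∇H(x)` with `ℓ(x) = uᵀx`, `H(x) = (1/2)xᵀAx` (`A` symmetric,
`J` skew-symmetric), then `∇H(x)ᵀ(x'ℓ(x) + xℓ(x')) = ∇H(x')ᵀ(x'ℓ(x) + xℓ(x'))`. -/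
theorem kahan_suslov_key_identity (n : ℕ) (h : ℝ) (hh : h ≠ 0)
    (u : Fin n → ℝ) (A J : Matrix (Fin n) (Fin n) ℝ)
    (hA : A.IsSymm) (hJ : Jᵀ = -J)
    (f : (Fin n → ℝ) → (Fin n → ℝ))
    (hf : ∀ x, f x = (u ⬝ᵥ x) • (J * A).mulVec x)
    (x x' : Fin n → ℝ)
    (hkahan : (1/h) • (x' - x) =
      -((1/2 : ℝ) • f x) + (2 : ℝ) • f ((1/2 : ℝ) • (x + x')) - (1/2 : ℝ) • f x') :
    A.mulVec x ⬝ᵥ ((u ⬝ᵥ x) • x' + (u ⬝ᵥ x') • x) =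
      A.mulVec x' ⬝ᵥ ((u ⬝ᵥ x) • x' + (u ⬝ᵥ x') • x) := by
  rw [hf, hf, hf, kahan_combination_eq_polarization, one_div h] at hkahan
  set v := (u ⬝ᵥ x) • x' + (u ⬝ᵥ x') • x
  have hstep : x' - x = h • (1/2 : ℝ) • J *ᵥ (A *ᵥ v) := by
    rw [mulVec_mulVec, ← hkahan, smul_inv_smul₀ hh]
  have horth : (x' - x) ⬝ᵥ A *ᵥ v = 0 := by
    rw [hstep, smul_dotProduct, smul_dotProduct,
      mulVec_dotProduct_self_eq_zero_of_transpose_eq_neg hJ, smul_zero, smul_zero]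
  have hsymm : A *ᵥ (x' - x) ⬝ᵥ v = (x' - x) ⬝ᵥ A *ᵥ v := by
    rw [← vecMul_transpose, hA.eq, dotProduct_mulVec]
  rw [mulVec_sub, sub_dotProduct, horth, sub_eq_zero] at hsymm
  exact hsymm.symm
end
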